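/- arXiv:0712.2892 — 3 statements merged into one kernel-verified Lean document; each statement's English description precedes it below -/
import Mathlib

section
/- As w ranges over ℝ₊^n, there are only finitely many distinct initial ideals in_{<_w}(I) of a fixed ideal I ⊆ K[x₁,…,xₙ]; equivalently, a fixed ideal I admits only finitely many distinct monomial initial ideals over all term orders. -/
open MvPolynomial

noncomputable def wdeg {σ : Type*} [Fintype σ] (w : σ → ℝ) (a : σ →₀ ℕ) : ℝ :=
  ∑ i, w i * (a i : ℝ)

open scoped Classical in
noncomputable def initialForm {K : Type*} [CommRing K] {σ : Type*} [Fintype σ]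
    (w : σ → ℝ) (f : MvPolynomial σ K) : MvPolynomial σ K :=
  ∑ a ∈ f.support.filter (fun a => ∀ b ∈ f.support, wdeg w b ≤ wdeg w a),
    monomial a (f.coeff a)

noncomputable def initialIdeal {K : Type*} [CommRing K] {σ : Type*} [Fintype σ]
    (w : σ → ℝ) (I : Ideal (MvPolynomial σ K)) : Ideal (MvPolynomial σ K) :=
  Ideal.span (initialForm w '' (I : Set (MvPolynomial σ K)))

def IsTermOrder {σ : Type*} (lt : (σ →₀ ℕ) → (σ →₀ ℕ) → Prop) : Prop :=
  Transitive lt ∧ Irreflexive lt ∧ (∀ a b, a = b ∨ lt a b ∨ lt b a) ∧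
    (∀ a, a ≠ 0 → lt 0 a) ∧ (∀ a b c, lt a b → lt (a + c) (b + c))

def ltW {σ : Type*} [Fintype σ] (w : σ → ℝ) (lt : (σ →₀ ℕ) → (σ →₀ ℕ) → Prop)
    (a b : σ →₀ ℕ) : Prop :=
  wdeg w a < wdeg w b ∨ (wdeg w a = wdeg w b ∧ lt a b)

def IsLeadExp {K : Type*} [CommRing K] {σ : Type*}
    (lt : (σ →₀ ℕ) → (σ →₀ ℕ) → Prop) (f : MvPolynomial σ K) (a : σ →₀ ℕ) : Prop :=
  a ∈ f.support ∧ ∀ b ∈ f.support, b ≠ a → lt b a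

noncomputable def leadTermIdeal {K : Type*} [CommRing K] {σ : Type*}
    (lt : (σ →₀ ℕ) → (σ →₀ ℕ) → Prop) (I : Ideal (MvPolynomial σ K)) :
    Ideal (MvPolynomial σ K) :=
  Ideal.span {m | ∃ f ∈ I, f ≠ 0 ∧ ∃ a, IsLeadExp lt f a ∧ m = monomial a (f.coeff a)}

def IsGB {K : Type*} [CommRing K] {σ : Type*} (lt : (σ →₀ ℕ) → (σ →₀ ℕ) → Prop)
    (I : Ideal (MvPolynomial σ K)) (G : Finset (MvPolynomial σ K)) : Prop :=
  (↑G : Set (MvPolynomial σ K)) ⊆ ↑I ∧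
    leadTermIdeal lt I =
      Ideal.span {m | ∃ g ∈ G, ∃ a, IsLeadExp lt g a ∧ m = monomial a (g.coeff a)}

def IsReducedGB {K : Type*} [CommRing K] {σ : Type*} (lt : (σ →₀ ℕ) → (σ →₀ ℕ) → Prop)
    (I : Ideal (MvPolynomial σ K)) (G : Finset (MvPolynomial σ K)) : Prop :=
  IsGB lt I G ∧ (∀ g ∈ G, g ≠ 0) ∧
    (∀ g ∈ G, ∀ a, IsLeadExp lt g a → g.coeff a = 1) ∧
    (∀ g ∈ G, ∀ h ∈ G, g ≠ h → ∀ a, IsLeadExp lt g a → ∀ b ∈ h.support, ¬ (∀ i, a i ≤ b i))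

def IsMonomialIdeal {K : Type*} [CommRing K] {σ : Type*}
    (J : Ideal (MvPolynomial σ K)) : Prop :=
  ∃ S : Set (σ →₀ ℕ), J = Ideal.span ((fun a => monomial a (1 : K)) '' S)

/-!
A term order is a monomial order in the sense of `MonomialOrder` (well-foundedness is Dickson's
lemma), and its initial ideal is the span of the leading terms of `I`.

Let `M = ⟨x^a : a ∈ D⟩` and consider the monomial orders `≺` with `M ⊆ in_≺(I)`, witnessed by
leading exponents. If some `in_≺(I)` differs from `M`, dividing an element of `I` whose leading
exponent lies outside `M` by elements of `I` with leading exponents in `D` leaves a remainder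
`0 ≠ f ∈ I` none of whose monomials lies in `M`. Every order then takes its leading exponent of `f`
in the finite support of `f`, so the orders fall into finitely many classes, each with a strictly
larger monomial ideal `M + ⟨x^c⟩`. Noetherian induction on `M` concludes.
-/

namespace MvPolynomial

theorem monomial_one_mem_span_monomial_one_iff {σ R : Type*} [CommSemiring R] [Nontrivial R]
    {D : Set (σ →₀ ℕ)} {c : σ →₀ ℕ} :
    monomial c (1 : R) ∈ Ideal.span ((fun a => monomial a (1 : R)) '' D) ↔ ∃ a ∈ D, a ≤ c := by
  classical
  simp [mem_ideal_span_monomial_image, support_monomial]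

end MvPolynomial

namespace MonomialOrder

section CommSemiring

variable {σ R : Type*} [CommSemiring R] (m : MonomialOrder σ) (I : Ideal (MvPolynomial σ R))

noncomputable def initialIdeal : Ideal (MvPolynomial σ R) :=
  Ideal.span (m.leadingTerm '' I)

def leadingExponents : Set (σ →₀ ℕ) :=
  m.degree '' ((I : Set (MvPolynomial σ R)) \ {0})

variable {m} in
theorem coeff_mul_eq_zero_of_not_degree_le [NoZeroDivisors R] {b p : MvPolynomial σ R}
    {s : σ →₀ ℕ} (hle : m.degree (b * p) ≼[m] s) (hs : ¬ m.degree b ≤ s) :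
    (b * p).coeff s = 0 := by
  by_contra hne
  have hbp : b * p ≠ 0 := fun h => hne (by rw [h, coeff_zero])
  have hdeg : m.degree (b * p) = s :=
    m.toSyn.injective (le_antisymm hle (m.le_degree (mem_support_iff.mpr hne)))
  rw [m.degree_mul (left_ne_zero_of_mul hbp) (right_ne_zero_of_mul hbp)] at hdeg
  exact hs (hdeg ▸ le_self_add)

end CommSemiring

section Field

variable {σ K : Type*} [Field K] {m : MonomialOrder σ} {I : Ideal (MvPolynomial σ K)}

variable (m I) in
theorem initialIdeal_eq_span_monomial :
    m.initialIdeal I = Ideal.span ((fun a => monomial a (1 : K)) '' m.leadingExponents I) := by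
  rw [initialIdeal, span_leadingTerm_eq_span_monomial', leadingExponents, Set.image_image]

theorem exists_mem_leadingExponents_not_ge {D : Set (σ →₀ ℕ)} (hD : D ⊆ m.leadingExponents I)
    (hne : m.initialIdeal I ≠ Ideal.span ((fun a => monomial a (1 : K)) '' D)) :
    ∃ s ∈ m.leadingExponents I, ∀ a ∈ D, ¬ a ≤ s := by
  by_contra! hge
  refine hne (le_antisymm ?_ ?_)
  · rw [initialIdeal_eq_span_monomial, Ideal.span_le]
    rintro _ ⟨s, hs, rfl⟩
    exact monomial_one_mem_span_monomial_one_iff.mpr (hge s hs)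
  · rw [initialIdeal_eq_span_monomial]
    exact Ideal.span_mono (Set.image_mono hD)

theorem exists_ne_zero_support_not_ge {D : Set (σ →₀ ℕ)} (hD : D ⊆ m.leadingExponents I)
    {s : σ →₀ ℕ} (hs : s ∈ m.leadingExponents I) (hsD : ∀ a ∈ D, ¬ a ≤ s) :
    ∃ f ∈ I, f ≠ 0 ∧ ∀ c ∈ f.support, ∀ a ∈ D, ¬ a ≤ c := by
  classical
  obtain ⟨g, ⟨hgI, hg0⟩, rfl⟩ := hs
  set B : Set (MvPolynomial σ K) := ((I : Set (MvPolynomial σ K)) \ {0}) ∩ m.degree ⁻¹' D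
  have hBunit : ∀ b ∈ B, IsUnit (m.leadingCoeff b) := fun b hb =>
    (m.leadingCoeff_ne_zero_iff.mpr hb.1.2).isUnit
  obtain ⟨q, r, hgr, hdeg, hr⟩ := m.div_set hBunit g
  set l := Finsupp.linearCombination (MvPolynomial σ K) (fun b : B => (b : MvPolynomial σ K)) q
    with hl_def
  have hlI : l ∈ I := by
    have : l ∈ LinearMap.range (Finsupp.linearCombination (MvPolynomial σ K)
        (fun b : B => (b : MvPolynomial σ K))) := ⟨q, rfl⟩
    rw [Finsupp.range_linearCombination] at this
    exact Submodule.span_le.mpr (by rintro _ ⟨b, rfl⟩; exact b.2.1.1) this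
  -- the leading monomial of `g` is not divisible by any `x^a`, `a ∈ D`, so division keeps it
  have hl : l.coeff (m.degree g) = 0 := by
    rw [hl_def, Finsupp.linearCombination_apply, Finsupp.sum, coeff_sum]
    refine Finset.sum_eq_zero fun b _ => ?_
    rw [smul_eq_mul, mul_comm]
    exact coeff_mul_eq_zero_of_not_degree_le (hdeg b) (hsD _ b.2.2)
  refine ⟨r, ?_, ?_, ?_⟩
  · rw [show r = g - l by rw [hgr]; ring]
    exact I.sub_mem hgI hlI
  · rintro rfl
    have := congrArg (coeff (m.degree g)) hgr
    rw [add_zero, hl] at this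
    exact m.coeff_degree_ne_zero_iff.mpr hg0 this
  · rintro c hc a ha
    obtain ⟨b, hb, rfl⟩ := hD ha
    exact hr c hc b ⟨hb, ha⟩

variable [Finite σ] (I)

theorem finite_initialIdeal_of_subset_leadingExponents (D : Set (σ →₀ ℕ)) :
    ((fun m : MonomialOrder σ => m.initialIdeal I) '' {m | D ⊆ m.leadingExponents I}).Finite := by
  obtain ⟨M, hM⟩ : ∃ M, Ideal.span ((fun a => monomial a (1 : K)) '' D) = M := ⟨_, rfl⟩
  induction M using WellFoundedGT.induction generalizing D with
  | _ M IH =>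
    by_cases hall : ∀ m : MonomialOrder σ, D ⊆ m.leadingExponents I → m.initialIdeal I = M
    · exact (Set.finite_singleton M).subset (by rintro _ ⟨m, hm, rfl⟩; exact hall m hm)
    push Not at hall
    obtain ⟨m, hmD, hne⟩ := hall
    obtain ⟨s, hs, hsD⟩ := exists_mem_leadingExponents_not_ge hmD (hM ▸ hne)
    obtain ⟨f, hfI, hf0, hfD⟩ := exists_ne_zero_support_not_ge hmD hs hsD
    refine (f.support.finite_toSet.biUnion fun c hc => IH _ ?_ (insert c D) rfl).subset ?_
    · rw [← hM]
      refine lt_of_le_of_ne (Ideal.span_mono (Set.image_mono (Set.subset_insert c D)))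
        fun heq => ?_
      have hc_mem : monomial c (1 : K) ∈ Ideal.span ((fun a => monomial a (1 : K)) '' insert c D) :=
        Ideal.subset_span ⟨c, Set.mem_insert c D, rfl⟩
      obtain ⟨a, ha, hac⟩ := monomial_one_mem_span_monomial_one_iff.mp (heq ▸ hc_mem)
      exact hfD c hc a ha hac
    · rintro _ ⟨m', hm', rfl⟩
      exact Set.mem_biUnion (m'.degree_mem_support hf0)
        ⟨m', Set.insert_subset ⟨f, ⟨hfI, hf0⟩, rfl⟩ hm', rfl⟩

theorem finite_range_initialIdeal :
    (Set.range fun m : MonomialOrder σ => m.initialIdeal I).Finite := by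
  simpa using finite_initialIdeal_of_subset_leadingExponents I ∅

end Field

end MonomialOrder

namespace IsTermOrder

variable {σ : Type*} {lt : (σ →₀ ℕ) → (σ →₀ ℕ) → Prop}

theorem isStrictTotalOrder (h : IsTermOrder lt) : IsStrictTotalOrder (σ →₀ ℕ) lt where
  trans _ _ _ := @h.1 _ _ _
  irrefl := h.2.1
  trichotomous a b hab hba := (h.2.2.1 a b).resolve_right (not_or_intro hab hba)

theorem lt_of_le_of_ne (h : IsTermOrder lt) {a b : σ →₀ ℕ} (hab : a ≤ b) (hne : a ≠ b) :
    lt a b := by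
  obtain ⟨c, rfl⟩ := le_iff_exists_add.mp hab
  have hc : c ≠ 0 := by rintro rfl; simp at hne
  simpa [add_comm] using h.2.2.2.2 0 c a (h.2.2.2.1 c hc)

theorem wellFounded [Finite σ] (h : IsTermOrder lt) : WellFounded lt := by
  have := h.isStrictTotalOrder
  rw [RelEmbedding.wellFounded_iff_isEmpty]
  refine ⟨fun e => ?_⟩
  obtain ⟨i, j, hij, hle⟩ := (Set.isPWO_of_wellQuasiOrderedLE Set.univ).exists_lt
    (f := fun k => e k) fun _ => Set.mem_univ _
  have hdesc : lt (e j) (e i) := e.map_rel_iff.mpr hij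
  rcases eq_or_ne (e i) (e j) with heq | hne
  · exact h.2.1 _ (heq ▸ hdesc)
  · exact h.2.1 _ (h.1 (h.lt_of_le_of_ne hle hne) hdesc)

/-- A copy of `σ →₀ ℕ` on which `lt` can be installed as the order without clashing with the
pointwise order of `σ →₀ ℕ`. -/
def Syn (_ : (σ →₀ ℕ) → (σ →₀ ℕ) → Prop) : Type _ := σ →₀ ℕ

noncomputable instance : AddCommMonoid (Syn lt) := inferInstanceAs (AddCommMonoid (σ →₀ ℕ))

noncomputable def toMonomialOrder [Finite σ] (h : IsTermOrder lt) : MonomialOrder σ :=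
  letI : LinearOrder (Syn lt) := @linearOrderOfSTO _ lt h.isStrictTotalOrder (Classical.decRel _)
  { syn := Syn lt
    isOrderedAddMonoid_syn :=
      { add_le_add_left := by
          rintro a b (rfl | hab) c
          · exact Or.inl rfl
          · exact Or.inr (h.2.2.2.2 a b c hab) }
    toSyn := AddEquiv.refl _
    toSyn_monotone := fun a b hab => by
      rcases eq_or_ne a b with rfl | hne
      · exact Or.inl rfl
      · exact Or.inr (h.lt_of_le_of_ne hab hne)
    wellFoundedLT_syn := ⟨by exact h.wellFounded⟩ }

variable [Finite σ] (h : IsTermOrder lt)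

theorem toSyn_lt_toSyn_iff {a b : σ →₀ ℕ} :
    h.toMonomialOrder.toSyn a < h.toMonomialOrder.toSyn b ↔ lt a b := Iff.rfl

theorem isLeadExp_iff {K : Type*} [CommRing K] {f : MvPolynomial σ K} {a : σ →₀ ℕ} :
    IsLeadExp lt f a ↔ f ≠ 0 ∧ h.toMonomialOrder.degree f = a := by
  set m := h.toMonomialOrder
  constructor
  · rintro ⟨ha, hmax⟩
    have hf0 : f ≠ 0 := ne_zero_iff.mpr ⟨a, mem_support_iff.mp ha⟩
    refine ⟨hf0, by_contra fun hne => ?_⟩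
    exact (m.le_degree ha).not_gt (h.toSyn_lt_toSyn_iff.mpr (hmax _ (m.degree_mem_support hf0) hne))
  · rintro ⟨hf0, rfl⟩
    exact ⟨m.degree_mem_support hf0, fun b hb hne =>
      h.toSyn_lt_toSyn_iff.mp ((m.le_degree hb).lt_of_ne (m.toSyn.injective.ne hne))⟩

theorem leadTermIdeal_eq_initialIdeal {K : Type*} [CommRing K] (I : Ideal (MvPolynomial σ K)) :
    leadTermIdeal lt I = h.toMonomialOrder.initialIdeal I := by
  rw [leadTermIdeal, MonomialOrder.initialIdeal,
    ← MonomialOrder.span_leadingTerm_sdiff_singleton_zero]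
  congr 1
  ext p
  simp only [h.isLeadExp_iff, Set.mem_ofPred_eq, Set.mem_image, Set.mem_sdiff, SetLike.mem_coe,
    Set.mem_singleton_iff]
  constructor
  · rintro ⟨f, hfI, hf0, _, ⟨-, rfl⟩, rfl⟩
    exact ⟨f, ⟨hfI, hf0⟩, rfl⟩
  · rintro ⟨f, ⟨hfI, hf0⟩, rfl⟩
    exact ⟨f, hfI, hf0, _, ⟨hf0, rfl⟩, rfl⟩

end IsTermOrder

/-- A fixed ideal `I` has only finitely many distinct (monomial) initial ideals as the
term order varies; in particular only finitely many initial ideals `in_{<_w}(I)` occur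
as `w` ranges over `ℝ₊ⁿ`. -/
theorem stmt6 {K : Type*} [Field K] {n : ℕ} (I : Ideal (MvPolynomial (Fin n) K)) :
    {J : Ideal (MvPolynomial (Fin n) K) |
      ∃ lt : (Fin n →₀ ℕ) → (Fin n →₀ ℕ) → Prop, IsTermOrder lt ∧ J = leadTermIdeal lt I}.Finite := by
  refine (MonomialOrder.finite_range_initialIdeal I).subset ?_
  rintro _ ⟨lt, h, rfl⟩
  exact ⟨h.toMonomialOrder, (h.leadTermIdeal_eq_initialIdeal I).symm⟩
end

section
/- Fix an ideal I ⊆ K[x₁,…,xₙ], a term order <, and a weight w ∈ ℝ₊^n such that in_w(I) = in_{<_w}(I) is a monomial ideal. Let G be the reduced Gröbner basis of I with respect to <_w. Then the I-equivalence class of w equals the relatively open convex polyhedral cone c[w] = { w' ∈ ℝ^n : in_{w'}(g) = in_w(g) for all g ∈ G }. -/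
open MvPolynomial

/-!
Let `M` be the monomial ideal generated by the `<_w`-leading monomials of `G`; it equals
`in_w(I) = in_{<_w}(I)`. Reducedness of `G` forces `in_u(g) = x^{lead g}` whenever
`in_u(g) ∈ M`, which gives the inclusion of the equivalence class in the cone. Conversely, if
`in_{w'}(g) = x^{lead g}` for all `g ∈ G`, top-reducing `f ∈ I` by `G` with respect to `<_w` only
creates exponents of smaller `w'`-weight. So a `w'`-maximal exponent of `f` that is not divisible
by any leading exponent survives into an element of `I` whose `<_w`-leading exponent is not
divisible by any leading exponent either, contradicting `in_{<_w}(I) = M`. Hence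
`in_{w'}(I) ⊆ M`, and `M ⊆ in_{w'}(I)` because the generators of `M` are the `in_{w'}(g)`.
-/

section

variable {σ K : Type*} [CommRing K]

section TermOrder

variable {lt : (σ →₀ ℕ) → (σ →₀ ℕ) → Prop}

theorem IsTermOrder.isStrictTotalOrder_s7 (hlt : IsTermOrder lt) :
    IsStrictTotalOrder (σ →₀ ℕ) lt where
  trichotomous a b hab hba := (hlt.2.2.1 a b).resolve_right (not_or_intro hab hba)
  irrefl := hlt.2.1
  trans _ _ _ := @hlt.1 _ _ _

theorem IsTermOrder.eq_or_lt_of_le (hlt : IsTermOrder lt) {a b : σ →₀ ℕ} (h : a ≤ b) :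
    a = b ∨ lt a b := by
  obtain ⟨-, -, -, hpos, hadd⟩ := hlt
  obtain ⟨c, rfl⟩ := exists_add_of_le h
  rcases eq_or_ne c 0 with rfl | hc
  · exact Or.inl (add_zero a).symm
  · simpa [add_comm] using Or.inr (hadd 0 c a (hpos c hc))

theorem IsTermOrder.wellFounded_s7 [Finite σ] (hlt : IsTermOrder lt) : WellFounded lt := by
  have := hlt.isStrictTotalOrder_s7
  refine RelEmbedding.wellFounded_iff_isEmpty.2 ⟨fun f => ?_⟩
  obtain ⟨m, k, hmk, hle⟩ := wellQuasiOrdered_le f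
  have hdesc : lt (f k) (f m) := f.map_rel_iff.2 hmk
  rcases hlt.eq_or_lt_of_le hle with heq | hmk'
  · exact irrefl _ (heq ▸ hdesc)
  · exact irrefl _ (_root_.trans hmk' hdesc)

theorem IsTermOrder.exists_isLeadExp (hlt : IsTermOrder lt) {f : MvPolynomial σ K}
    (hf : f ≠ 0) : ∃ a, IsLeadExp lt f a := by
  have := hlt.isStrictTotalOrder_s7
  obtain ⟨b, hb⟩ := support_nonempty.2 hf
  obtain ⟨⟨a, ha⟩, -, hmax⟩ :=
    (f.support.finite_toSet.wellFoundedOn (r := Function.swap lt)).has_min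
    Set.univ ⟨⟨b, hb⟩, trivial⟩
  refine ⟨a, ha, fun c hc hca => ?_⟩
  rcases trichotomous_of lt c a with h | h | h
  · exact h
  · exact absurd h hca
  · exact absurd h (hmax ⟨c, hc⟩ trivial)

theorem IsLeadExp.unique [IsStrictOrder (σ →₀ ℕ) lt] {f : MvPolynomial σ K} {a b : σ →₀ ℕ}
    (ha : IsLeadExp lt f a) (hb : IsLeadExp lt f b) : a = b := by
  by_contra hab
  exact irrefl _ (_root_.trans (hb.2 a ha.1 hab) (ha.2 b hb.1 (Ne.symm hab)))

end TermOrder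

section Weight

variable [Fintype σ]

theorem wdeg_add (w : σ → ℝ) (a b : σ →₀ ℕ) : wdeg w (a + b) = wdeg w a + wdeg w b := by
  simp [wdeg, mul_add, Finset.sum_add_distrib]

theorem wdeg_nonneg {w : σ → ℝ} (hw : ∀ i, 0 ≤ w i) (a : σ →₀ ℕ) : 0 ≤ wdeg w a :=
  Finset.sum_nonneg fun i _ => mul_nonneg (hw i) (Nat.cast_nonneg _)

theorem IsTermOrder.ltW {lt : (σ →₀ ℕ) → (σ →₀ ℕ) → Prop} (hlt : IsTermOrder lt)
    {w : σ → ℝ} (hw : ∀ i, 0 ≤ w i) : IsTermOrder (ltW w lt) := by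
  obtain ⟨htrans, hirr, htri, hpos, hadd⟩ := hlt
  refine ⟨?_, ?_, fun a b => ?_, fun a ha => ?_, ?_⟩
  · rintro a b c (hab | ⟨hab, hab'⟩) (hbc | ⟨hbc, hbc'⟩)
    · exact Or.inl (hab.trans hbc)
    · exact Or.inl (hbc ▸ hab)
    · exact Or.inl (hab ▸ hbc)
    · exact Or.inr ⟨hab.trans hbc, htrans hab' hbc'⟩
  · rintro a (h | ⟨-, h⟩)
    exacts [lt_irrefl _ h, hirr a h]
  · rcases lt_trichotomy (wdeg w a) (wdeg w b) with h | h | h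
    · exact Or.inr (Or.inl (Or.inl h))
    · rcases htri a b with h' | h' | h'
      exacts [Or.inl h', Or.inr (Or.inl (Or.inr ⟨h, h'⟩)), Or.inr (Or.inr (Or.inr ⟨h.symm, h'⟩))]
    · exact Or.inr (Or.inr (Or.inl h))
  · have h0 : wdeg w 0 = 0 := by simp [wdeg]
    rcases (wdeg_nonneg hw a).eq_or_lt with h | h
    · exact Or.inr ⟨h0.trans h, hpos a ha⟩
    · exact Or.inl (h0 ▸ h)
  · rintro a b c (h | ⟨h, h'⟩)
    · exact Or.inl (by simpa [wdeg_add] using h)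
    · exact Or.inr ⟨by rw [wdeg_add, wdeg_add, h], hadd a b c h'⟩

end Weight

section InitialForm

variable [Fintype σ] {w : σ → ℝ} {f : MvPolynomial σ K} {a b : σ →₀ ℕ}

open scoped Classical in
theorem coeff_initialForm :
    coeff b (initialForm w f) =
      if b ∈ f.support.filter (fun a => ∀ c ∈ f.support, wdeg w c ≤ wdeg w a)
      then coeff b f else 0 := by
  simp only [initialForm, coeff_sum, coeff_monomial]
  rw [Finset.sum_ite_eq']

theorem mem_support_initialForm :
    b ∈ (initialForm w f).support ↔ b ∈ f.support ∧ ∀ c ∈ f.support, wdeg w c ≤ wdeg w b := by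
  classical
  rw [mem_support_iff, coeff_initialForm]
  split_ifs with h
  · exact iff_of_true (mem_support_iff.1 (Finset.mem_filter.1 h).1) (Finset.mem_filter.1 h)
  · exact iff_of_false (fun h' => h' rfl) (fun h' => h (Finset.mem_filter.2 h'))

theorem coeff_initialForm_of_mem_support (h : b ∈ (initialForm w f).support) :
    coeff b (initialForm w f) = coeff b f := by
  classical
  rw [coeff_initialForm, if_pos (Finset.mem_filter.2 (mem_support_initialForm.1 h))]

theorem initialForm_ne_zero (w : σ → ℝ) (hf : f ≠ 0) : initialForm w f ≠ 0 := by
  obtain ⟨b, hb, hmax⟩ := f.support.exists_max_image (wdeg w) (support_nonempty.2 hf)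
  exact support_nonempty.1 ⟨b, mem_support_initialForm.2 ⟨hb, hmax⟩⟩

theorem wdeg_lt_of_initialForm_eq_monomial {c : K} (h : initialForm w f = monomial a c)
    (hc : c ≠ 0) (hb : b ∈ f.support) (hba : b ≠ a) : wdeg w b < wdeg w a := by
  classical
  have hsupp : ∀ e, e ∈ (initialForm w f).support ↔ e = a := fun e => by
    rw [h, support_monomial, if_neg hc, Finset.mem_singleton]
  obtain ⟨-, hmax⟩ := mem_support_initialForm.1 ((hsupp a).2 rfl)
  refine (hmax b hb).lt_of_ne fun hab => hba ((hsupp b).1 ?_)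
  exact mem_support_initialForm.2 ⟨hb, fun e he => hab ▸ hmax e he⟩

theorem initialForm_mem_initialIdeal {I : Ideal (MvPolynomial σ K)} (hf : f ∈ I) :
    initialForm w f ∈ initialIdeal w I :=
  Ideal.subset_span ⟨f, hf, rfl⟩

end InitialForm

def leadExps (lt : (σ →₀ ℕ) → (σ →₀ ℕ) → Prop) (G : Finset (MvPolynomial σ K)) :
    Set (σ →₀ ℕ) :=
  {a | ∃ g ∈ G, IsLeadExp lt g a}

section GroebnerBasis

variable {lt : (σ →₀ ℕ) → (σ →₀ ℕ) → Prop} {I : Ideal (MvPolynomial σ K)}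
  {G : Finset (MvPolynomial σ K)} {g : MvPolynomial σ K} {a b : σ →₀ ℕ}

theorem IsReducedGB.leadTermIdeal_eq (hG : IsReducedGB lt I G) :
    leadTermIdeal lt I = Ideal.span ((fun a => monomial a (1 : K)) '' leadExps lt G) := by
  rw [hG.1.2]
  congr 1
  ext m
  constructor
  · rintro ⟨g, hg, a, ha, rfl⟩
    exact ⟨a, ⟨g, hg, ha⟩, by rw [hG.2.2.1 g hg a ha]⟩
  · rintro ⟨a, ⟨g, hg, ha⟩, rfl⟩
    exact ⟨g, hg, a, ha, by rw [hG.2.2.1 g hg a ha]⟩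

theorem IsReducedGB.eq_of_mem_upperClosure (hlt : IsTermOrder lt) (hG : IsReducedGB lt I G)
    (hg : g ∈ G) (ha : IsLeadExp lt g a) (hb : b ∈ g.support)
    (hbG : b ∈ upperClosure (leadExps lt G)) : b = a := by
  have := hlt.isStrictTotalOrder_s7
  obtain ⟨s, ⟨h, hh, hs⟩, hsb⟩ := hbG
  by_cases hhg : h = g
  · subst hhg
    rcases hlt.eq_or_lt_of_le (hs.unique ha ▸ hsb) with hab | hab
    · exact hab.symm
    · by_contra hba
      exact irrefl _ (_root_.trans hab (ha.2 b hb hba))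
  · exact absurd (Finsupp.le_def.1 hsb) (hG.2.2.2 h hh g hg hhg s hs b hb)

theorem IsReducedGB.initialForm_eq_monomial [Fintype σ] (hlt : IsTermOrder lt)
    (hG : IsReducedGB lt I G) (hg : g ∈ G) (ha : IsLeadExp lt g a) {u : σ → ℝ}
    (hu : initialForm u g ∈ Ideal.span ((fun a => monomial a (1 : K)) '' leadExps lt G)) :
    initialForm u g = monomial a 1 := by
  have hsub : ∀ b ∈ (initialForm u g).support, b = a := fun b hb =>
    hG.eq_of_mem_upperClosure hlt hg ha (mem_support_initialForm.1 hb).1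
      (mem_upperClosure.2 (mem_ideal_span_monomial_image.1 hu b hb))
  obtain ⟨b, hb⟩ := support_nonempty.2 (initialForm_ne_zero u (hG.2.1 g hg))
  have haI : a ∈ (initialForm u g).support := hsub b hb ▸ hb
  ext b
  classical
  rw [coeff_monomial]
  split_ifs with hab
  · exact hab ▸ (coeff_initialForm_of_mem_support haI).trans (hG.2.2.1 g hg a ha)
  · exact notMem_support_iff.1 fun hb => hab (hsub b hb).symm

end GroebnerBasis

section Reduction

variable [Fintype σ] {lt : (σ →₀ ℕ) → (σ →₀ ℕ) → Prop} {u : σ → ℝ}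

theorem IsTermOrder.eq_or_lt_of_mem_support_monomial_mul (hlt : IsTermOrder lt)
    {g : MvPolynomial σ K} {A a b : σ →₀ ℕ} {d : K} (hA : IsLeadExp lt g A)
    (hu : ∀ e ∈ g.support, e ≠ A → wdeg u e < wdeg u A) (hAa : A ≤ a)
    (hb : b ∈ (monomial (a - A) d * g).support) :
    b = a ∨ lt b a ∧ wdeg u b < wdeg u a := by
  classical
  obtain ⟨c, rfl⟩ := exists_add_of_le hAa
  obtain ⟨c', hc', e, he, rfl⟩ := Finset.mem_add.1 (support_mul _ _ hb)
  obtain rfl : c = c' := by simpa [eq_comm] using support_monomial_subset hc'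
  rcases eq_or_ne e A with rfl | heA
  · exact Or.inl (add_comm _ _)
  · refine Or.inr ⟨?_, ?_⟩
    · simpa only [add_comm] using hlt.2.2.2.2 e A c (hA.2 e he heA)
    · rw [wdeg_add, wdeg_add]
      linarith [hu e he heA]

variable {I : Ideal (MvPolynomial σ K)} {G : Finset (MvPolynomial σ K)}
  (hGI : (G : Set (MvPolynomial σ K)) ⊆ I)
  (hmonic : ∀ g ∈ G, ∀ a, IsLeadExp lt g a → g.coeff a = 1)
  (hu : ∀ g ∈ G, ∀ a, IsLeadExp lt g a → ∀ e ∈ g.support, e ≠ a → wdeg u e < wdeg u a)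
include hGI hmonic hu

-- Top reduction by `G`: `b₀` is never touched, since every exponent created has smaller
-- `u`-weight than the one it replaces.
theorem IsTermOrder.exists_isLeadExp_notMem_upperClosure (hlt : IsTermOrder lt)
    {b₀ : σ →₀ ℕ} (hb₀ : b₀ ∉ upperClosure (leadExps lt G)) {p : MvPolynomial σ K}
    (hp : p ∈ I) (hb₀p : b₀ ∈ p.support) (hpu : ∀ b ∈ p.support, wdeg u b ≤ wdeg u b₀) :
    ∃ q ∈ I, ∃ a, IsLeadExp lt q a ∧ a ∉ upperClosure (leadExps lt G) := by
  obtain ⟨a, ha⟩ := hlt.exists_isLeadExp (support_nonempty.1 ⟨b₀, hb₀p⟩)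
  induction a using hlt.wellFounded_s7.induction generalizing p with
  | _ a ih =>
  by_cases hred : a ∈ upperClosure (leadExps lt G)
  swap
  · exact ⟨p, hp, a, ha, hred⟩
  obtain ⟨A, ⟨g, hg, hA⟩, hAa⟩ := hred
  set q := p - monomial (a - A) (p.coeff a) * g
  have hqI : q ∈ I := I.sub_mem hp (I.mul_mem_left _ (hGI hg))
  have hqa : q.coeff a = 0 := by
    simp [q, coeff_monomial_mul', tsub_tsub_cancel_of_le hAa, hmonic g hg A hA]
  have hq : ∀ b, q.coeff b ≠ p.coeff b → b = a ∨ lt b a ∧ wdeg u b < wdeg u a := fun b hb =>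
    hlt.eq_or_lt_of_mem_support_monomial_mul (d := p.coeff a) hA (hu g hg A hA) hAa
      (mem_support_iff.2 fun h => hb (by simp [q, h]))
  have hqb₀ : q.coeff b₀ = p.coeff b₀ := by
    by_contra h
    rcases hq b₀ h with h | ⟨-, h⟩
    · exact hb₀ (h ▸ ⟨A, ⟨g, hg, hA⟩, hAa⟩)
    · exact (hpu a ha.1).not_gt h
  have hqsupp : ∀ b ∈ q.support, lt b a ∧ wdeg u b ≤ wdeg u b₀ := by
    intro b hb
    have hba : b ≠ a := by rintro rfl; exact mem_support_iff.1 hb hqa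
    by_cases h : q.coeff b = p.coeff b
    · have hbp : b ∈ p.support := by rwa [mem_support_iff, ← h, ← mem_support_iff]
      exact ⟨ha.2 b hbp hba, hpu b hbp⟩
    · obtain ⟨hba', hbu⟩ := (hq b h).resolve_left hba
      exact ⟨hba', hbu.le.trans (hpu a ha.1)⟩
  have hb₀q : b₀ ∈ q.support := by rwa [mem_support_iff, hqb₀, ← mem_support_iff]
  obtain ⟨a', ha'⟩ := hlt.exists_isLeadExp (support_nonempty.1 ⟨b₀, hb₀q⟩)
  exact ih a' (hqsupp a' ha'.1).1 hqI hb₀q (fun b hb => (hqsupp b hb).2) ha'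

end Reduction

theorem IsReducedGB.initialForm_mem_span_leadExps [Fintype σ]
    {lt : (σ →₀ ℕ) → (σ →₀ ℕ) → Prop} (hlt : IsTermOrder lt) {I : Ideal (MvPolynomial σ K)}
    {G : Finset (MvPolynomial σ K)} (hG : IsReducedGB lt I G) {u : σ → ℝ}
    (hu : ∀ g ∈ G, ∀ a, IsLeadExp lt g a → ∀ e ∈ g.support, e ≠ a → wdeg u e < wdeg u a)
    {f : MvPolynomial σ K} (hf : f ∈ I) :
    initialForm u f ∈ Ideal.span ((fun a => monomial a (1 : K)) '' leadExps lt G) := by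
  refine mem_ideal_span_monomial_image.2 fun b₀ hb₀ => mem_upperClosure.1 ?_
  by_contra hstd
  obtain ⟨hb₀f, hmax⟩ := mem_support_initialForm.1 hb₀
  obtain ⟨q, hq, a, ha, hastd⟩ :=
    hlt.exists_isLeadExp_notMem_upperClosure hG.1.1 hG.2.2.1 hu hstd hf hb₀f hmax
  have hlead : monomial a (q.coeff a) ∈ leadTermIdeal lt I :=
    Ideal.subset_span ⟨q, hq, support_nonempty.1 ⟨a, ha.1⟩, a, ha, rfl⟩
  rw [hG.leadTermIdeal_eq, mem_ideal_span_monomial_image] at hlead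
  refine hastd (mem_upperClosure.2 (hlead a ?_))
  classical
  rw [mem_support_iff, coeff_monomial, if_pos rfl]
  exact mem_support_iff.1 ha.1

end

theorem stmt7_general {K : Type*} [Field K] {n : ℕ} (I : Ideal (MvPolynomial (Fin n) K))
    (w : Fin n → ℝ) (hw : ∀ i, 0 ≤ w i)
    (lt : (Fin n →₀ ℕ) → (Fin n →₀ ℕ) → Prop) (hlt : IsTermOrder lt)
    (hmonEq : initialIdeal w I = leadTermIdeal (ltW w lt) I)
    (G : Finset (MvPolynomial (Fin n) K)) (hG : IsReducedGB (ltW w lt) I G) :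
    {w' : Fin n → ℝ | initialIdeal w' I = initialIdeal w I} =
      {w' : Fin n → ℝ | ∀ g ∈ G, initialForm w' g = initialForm w g} := by
  have hltW := hlt.ltW hw
  have hIM : initialIdeal w I =
      Ideal.span ((fun a => monomial a (1 : K)) '' leadExps (ltW w lt) G) :=
    hmonEq.trans hG.leadTermIdeal_eq
  have hGw : ∀ g ∈ G, ∀ a, IsLeadExp (ltW w lt) g a → initialForm w g = monomial a 1 :=
    fun g hg a ha => hG.initialForm_eq_monomial hltW hg ha
      (hIM ▸ initialForm_mem_initialIdeal (hG.1.1 hg))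
  ext w'
  constructor
  · intro hw' g hg
    obtain ⟨a, ha⟩ := hltW.exists_isLeadExp (hG.2.1 g hg)
    rw [hGw g hg a ha]
    exact hG.initialForm_eq_monomial hltW hg ha
      (hIM ▸ hw' ▸ initialForm_mem_initialIdeal (hG.1.1 hg))
  · intro hw'
    have hu : ∀ g ∈ G, ∀ a, IsLeadExp (ltW w lt) g a →
        ∀ e ∈ g.support, e ≠ a → wdeg w' e < wdeg w' a := fun g hg a ha _ he hea =>
      wdeg_lt_of_initialForm_eq_monomial ((hw' g hg).trans (hGw g hg a ha)) one_ne_zero he hea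
    refine hIM ▸ le_antisymm (Ideal.span_le.2 ?_) (Ideal.span_le.2 ?_)
    · rintro _ ⟨f, hf, rfl⟩
      exact hG.initialForm_mem_span_leadExps hltW hu hf
    · rintro _ ⟨a, ⟨g, hg, ha⟩, rfl⟩
      change monomial a (1 : K) ∈ initialIdeal w' I
      rw [← hGw g hg a ha, ← hw' g hg]
      exact initialForm_mem_initialIdeal (hG.1.1 hg)

/-- If `in_w(I) = in_{<_w}(I)` is a monomial ideal and `G` is the reduced Gröbner basis
of `I` with respect to `<_w`, then the `I`-equivalence class of `w` is the cone
`c[w] = {w' : in_{w'}(g) = in_w(g) for all g ∈ G}`. -/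
theorem stmt7 {K : Type*} [Field K] {n : ℕ} (I : Ideal (MvPolynomial (Fin n) K))
    (w : Fin n → ℝ) (hw : ∀ i, 0 ≤ w i)
    (lt : (Fin n →₀ ℕ) → (Fin n →₀ ℕ) → Prop) (hlt : IsTermOrder lt)
    (hmonEq : initialIdeal w I = leadTermIdeal (ltW w lt) I)
    (hmon : IsMonomialIdeal (initialIdeal w I))
    (G : Finset (MvPolynomial (Fin n) K)) (hG : IsReducedGB (ltW w lt) I G) :
    {w' : Fin n → ℝ | initialIdeal w' I = initialIdeal w I} =
      {w' : Fin n → ℝ | ∀ g ∈ G, initialForm w' g = initialForm w g} :=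
  stmt7_general I w hw lt hlt hmonEq G hG
end

section
/- Let I ⊆ K[x₁,…,x_r] be a homogeneous ideal and d a positive integer. Fix two weight vectors w, w' ∈ ℝ₊^r lying in the relative interiors of two distinct maximal Gröbner cones of I, with monomial initial ideals in_w(I) ≠ in_{w'}(I) in degree d, spanned by monomial bases {X^{a₁},…,X^{a_k}} and {X^{b₁},…,X^{b_k}} of (in_w I)_d and (in_{w'} I)_d respectively. Then the corresponding Plücker weights Σaᵢ and Σbᵢ are vertices of the degree-d state polytope St_d(I), and for every other weight v' in the support of the Plücker coordinate of I_d one has ⟨w, Σaᵢ⟩ > ⟨w, v'⟩. -/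
open MvPolynomial

/-- The degree-`d` Plücker support of a basis `f : Fin k → S_d` of `I_d`: the
collection of `k`-element sets `A` of exponents such that the corresponding `k × k`
minor of coefficients is nonsingular (i.e. the restricted coefficient vectors are
linearly independent). -/
def pluckerSupport {K : Type*} [Field K] {r k : ℕ}
    (f : Fin k → MvPolynomial (Fin r) K) : Set (Finset (Fin r →₀ ℕ)) :=
  {A | A.card = k ∧
    LinearIndependent K (fun j : Fin k => fun a : A => MvPolynomial.coeff (a : Fin r →₀ ℕ) (f j))}

/-- The weights (sums of exponent vectors, viewed in `ℝ^r`) occurring in the Plücker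
coordinate of `I_d`; the degree-`d` state polytope `St_d(I)` is their convex hull. -/
def stateWeights {K : Type*} [Field K] {r k : ℕ}
    (f : Fin k → MvPolynomial (Fin r) K) : Set (Fin r → ℝ) :=
  {v | ∃ A ∈ pluckerSupport f, v = fun i => ∑ a ∈ A, ((a i : ℕ) : ℝ)}

/-!
Restricting coefficients to `A` is injective on `I_d`: a top-`w`-weight term of `g ∈ I_d`
survives in `in_w(g)`, hence lies in the monomial ideal `in_w(I)` and so in `span X^A`.
Consequently `I_d` has a basis `g_a = X^a + (terms of smaller w-weight)`, `a ∈ A`. For any other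
`A'` in the Plücker support the minor of this basis on `A'` is nonzero, so some term of its
Leibniz expansion is, which gives a bijection `A' ≃ A` pairing each `b` with an `a` such that
`X^b` occurs in `g_a`; then `w·b ≤ w·a`, strictly unless `b = a`. Summing shows that `⟨w, ·⟩`
is strictly maximised at `Σ A` over the state weights, so `Σ A` is a vertex.
-/

theorem Finset.sum_lt_sum_of_equiv {α M : Type*} [AddCommMonoid M] [PartialOrder M]
    [IsOrderedCancelAddMonoid M] {A A' : Finset α} (e : A' ≃ A) {φ : α → M}
    (h : ∀ b : A', (b : α) ≠ e b → φ b < φ (e b)) (hne : A' ≠ A) :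
    ∑ b ∈ A', φ b < ∑ a ∈ A, φ a := by
  rw [← Finset.sum_coe_sort A', ← Finset.sum_coe_sort A, ← e.sum_comp]
  refine Finset.sum_lt_sum (fun b _ => ?_) ?_
  · by_cases hb : (b : α) = e b
    · rw [hb]
    · exact (h b hb).le
  · by_contra! hall
    have hfix : ∀ b : A', (b : α) = e b := fun b =>
      by_contra fun hb => hall b (Finset.mem_univ b) (h b hb)
    refine hne (Finset.eq_of_subset_of_card_le (fun b hb => ?_) ?_)
    · rw [show b = e ⟨b, hb⟩ from hfix ⟨b, hb⟩]
      exact (e ⟨b, hb⟩).2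
    simpa using (Fintype.card_congr e).ge

theorem exists_equiv_forall_ne_zero_of_linearIndependent {K ι κ : Type*} [Field K] [Fintype ι]
    [Fintype κ] [DecidableEq κ] {v : ι → κ → K} (hv : LinearIndependent K v)
    (hcard : Fintype.card κ = Fintype.card ι) :
    ∃ e : κ ≃ ι, ∀ j, v (e j) j ≠ 0 := by
  obtain ⟨e₀⟩ := Fintype.card_eq.mp hcard
  let M : Matrix κ κ K := Matrix.of fun i j => v (e₀ i) j
  have hM : M.det ≠ 0 :=
    ((M.isUnit_iff_isUnit_det).mp
      (Matrix.linearIndependent_rows_iff_isUnit.mp (hv.comp e₀ e₀.injective))).ne_zero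
  rw [Matrix.det_apply] at hM
  obtain ⟨τ, -, hτ⟩ := Finset.exists_ne_zero_of_sum_ne_zero hM
  exact ⟨τ.trans e₀, fun j => Finset.prod_ne_zero_iff.mp (right_ne_zero_of_smul hτ) j
    (Finset.mem_univ j)⟩

theorem notMem_convexHull_diff_singleton_of_forall_lt {𝕜 E : Type*} [Field 𝕜] [LinearOrder 𝕜]
    [IsStrictOrderedRing 𝕜] [AddCommGroup E] [Module 𝕜 E] (ℓ : E →ₗ[𝕜] 𝕜) {s : Set E} {x : E}
    (h : ∀ y ∈ s, y ≠ x → ℓ y < ℓ x) : x ∉ convexHull 𝕜 (s \ {x}) := fun hx =>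
  lt_irrefl (ℓ x) <|
    convexHull_min (fun y hy => h y hy.1 hy.2) (convex_halfSpace_lt ℓ.isLinear (ℓ x)) hx

section InitialIdeal

variable {K σ : Type*} [CommRing K]

theorem IsMonomialIdeal.monomial_one_mem {J : Ideal (MvPolynomial σ K)} (hJ : IsMonomialIdeal J)
    {p : MvPolynomial σ K} (hp : p ∈ J) {b : σ →₀ ℕ} (hb : b ∈ p.support) :
    monomial b (1 : K) ∈ J := by
  obtain ⟨S, rfl⟩ := hJ
  obtain ⟨s, hs, hsb⟩ := mem_ideal_span_monomial_image.mp hp b hb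
  refine mem_ideal_span_monomial_image.mpr fun c hc => ⟨s, hs, ?_⟩
  rwa [Finset.mem_singleton.mp (support_monomial_subset hc)]

variable [Fintype σ] {w : σ → ℝ}

theorem coeff_initialForm_of_forall_wdeg_le {g : MvPolynomial σ K} {b : σ →₀ ℕ}
    (hb : b ∈ g.support) (hmax : ∀ c ∈ g.support, wdeg w c ≤ wdeg w b) :
    coeff b (initialForm w g) = coeff b g := by
  classical
  rw [initialForm, coeff_sum]
  simp only [coeff_monomial]
  rw [Finset.sum_ite_eq']
  exact if_pos (Finset.mem_filter.mpr ⟨hb, hmax⟩)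

theorem monomial_one_mem_initialIdeal {I : Ideal (MvPolynomial σ K)}
    (hmon : IsMonomialIdeal (initialIdeal w I)) {g : MvPolynomial σ K} (hg : g ∈ I)
    {b : σ →₀ ℕ} (hb : b ∈ g.support) (hmax : ∀ c ∈ g.support, wdeg w c ≤ wdeg w b) :
    monomial b (1 : K) ∈ initialIdeal w I := by
  refine hmon.monomial_one_mem (Ideal.subset_span ⟨g, hg, rfl⟩) ?_
  rw [mem_support_iff, coeff_initialForm_of_forall_wdeg_le hb hmax]
  exact mem_support_iff.mp hb

end InitialIdeal

section TopWeight

variable {K σ : Type*} [Field K]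

noncomputable def restrictCoeffs (A : Finset (σ →₀ ℕ)) : MvPolynomial σ K →ₗ[K] (A → K) :=
  LinearMap.pi fun a => lcoeff K (a : σ →₀ ℕ)

@[simp] theorem restrictCoeffs_apply (A : Finset (σ →₀ ℕ)) (p : MvPolynomial σ K) (a : A) :
    restrictCoeffs A p a = coeff (a : σ →₀ ℕ) p := rfl

variable [Fintype σ]

def TopWeightExponentsIn (w : σ → ℝ) (A : Finset (σ →₀ ℕ)) (S : Submodule K (MvPolynomial σ K)) :
    Prop :=
  ∀ g ∈ S, ∀ b ∈ g.support, (∀ c ∈ g.support, wdeg w c ≤ wdeg w b) → b ∈ A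

theorem topWeightExponentsIn_of_initialIdeal {w : σ → ℝ} {I : Ideal (MvPolynomial σ K)}
    (hmon : IsMonomialIdeal (initialIdeal w I)) {d : ℕ} {A : Finset (σ →₀ ℕ)}
    (hAspan : ∀ g ∈ initialIdeal w I, g.IsHomogeneous d →
      g ∈ Submodule.span K ((fun a => (monomial a (1 : K) : MvPolynomial σ K)) '' A))
    {S : Submodule K (MvPolynomial σ K)} (hSI : S ≤ I.restrictScalars K)
    (hSd : S ≤ homogeneousSubmodule σ K d) :
    TopWeightExponentsIn w A S := by
  intro g hg b hb hmax
  have hbd : (monomial b (1 : K)).IsHomogeneous d :=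
    isHomogeneous_monomial _ <| by
      rw [Finsupp.degree_eq_weight_one]
      exact hSd hg (mem_support_iff.mp hb)
  have hspan := hAspan _ (monomial_one_mem_initialIdeal hmon (hSI hg) hb hmax) hbd
  rw [← restrictSupport_eq_span, monomial_mem_restrictSupport] at hspan
  exact hspan.resolve_right one_ne_zero

namespace TopWeightExponentsIn

variable {w : σ → ℝ} {A : Finset (σ →₀ ℕ)} {S : Submodule K (MvPolynomial σ K)}

theorem disjoint_ker (h : TopWeightExponentsIn w A S) :
    Disjoint S (LinearMap.ker (restrictCoeffs A)) := by
  refine Submodule.disjoint_def.mpr fun g hg hker => ?_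
  by_contra hg0
  obtain ⟨b, hb, hmax⟩ := g.support.exists_max_image (wdeg w) (support_nonempty.mpr hg0)
  exact mem_support_iff.mp hb (congrFun hker ⟨b, h g hg b hb hmax⟩)

theorem bijective_restrictCoeffs (h : TopWeightExponentsIn w A S)
    (hrank : Module.finrank K S = A.card) :
    Function.Bijective ((restrictCoeffs A).domRestrict S) := by
  have hinj : Function.Injective ((restrictCoeffs A).domRestrict S) :=
    LinearMap.injective_domRestrict_iff.mpr h.disjoint_ker
  have : FiniteDimensional K S := Module.Finite.of_injective _ hinj
  refine ⟨hinj, (LinearMap.injective_iff_surjective_of_finrank_eq_finrank ?_).mp hinj⟩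
  simp [hrank]

noncomputable def unitriangularBasis (h : TopWeightExponentsIn w A S)
    (hrank : Module.finrank K S = A.card) : Module.Basis A K S :=
  (Pi.basisFun K A).map (LinearEquiv.ofBijective _ (h.bijective_restrictCoeffs hrank)).symm

theorem restrictCoeffs_unitriangularBasis (h : TopWeightExponentsIn w A S)
    (hrank : Module.finrank K S = A.card) (a : A) :
    restrictCoeffs A (h.unitriangularBasis hrank a : MvPolynomial σ K) = Pi.single a 1 :=
  ((LinearEquiv.ofBijective _ (h.bijective_restrictCoeffs hrank)).apply_symm_apply _).trans
    (Pi.basisFun_apply K A a)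

theorem wdeg_lt_of_mem_support_unitriangularBasis (h : TopWeightExponentsIn w A S)
    (hrank : Module.finrank K S = A.card) (a : A) {b : σ →₀ ℕ}
    (hb : b ∈ (h.unitriangularBasis hrank a : MvPolynomial σ K).support) (hba : b ≠ a) :
    wdeg w b < wdeg w a := by
  set p := (h.unitriangularBasis hrank a : MvPolynomial σ K)
  have htop : ∀ c ∈ p.support, (∀ c' ∈ p.support, wdeg w c' ≤ wdeg w c) → c = a := by
    intro c hc hmax
    have hcoeff := congrFun (h.restrictCoeffs_unitriangularBasis hrank a)
      ⟨c, h p (h.unitriangularBasis hrank a).2 c hc hmax⟩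
    by_contra hca
    rw [restrictCoeffs_apply, Pi.single_eq_of_ne (fun hca' => hca (congrArg Subtype.val hca'))]
      at hcoeff
    exact mem_support_iff.mp hc hcoeff
  obtain ⟨c, hc, hmax⟩ := p.support.exists_max_image (wdeg w) ⟨b, hb⟩
  rw [htop c hc hmax] at hmax
  exact (hmax b hb).lt_of_ne fun hbeq =>
    hba (htop b hb fun c' hc' => (hmax c' hc').trans_eq hbeq.symm)

theorem sum_wdeg_lt (h : TopWeightExponentsIn w A S) (hrank : Module.finrank K S = A.card)
    {A' : Finset (σ →₀ ℕ)} (hcard : A'.card = A.card)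
    (hdisj : Disjoint S (LinearMap.ker (restrictCoeffs A'))) (hne : A' ≠ A) :
    ∑ b ∈ A', wdeg w b < ∑ a ∈ A, wdeg w a := by
  classical
  set g := h.unitriangularBasis hrank
  have hind : LinearIndependent K fun a => restrictCoeffs A' (g a : MvPolynomial σ K) :=
    g.linearIndependent.map' ((restrictCoeffs A').domRestrict S)
      (LinearMap.ker_eq_bot.mpr (LinearMap.injective_domRestrict_iff.mpr hdisj))
  obtain ⟨e, he⟩ := exists_equiv_forall_ne_zero_of_linearIndependent hind (by simp [hcard])
  exact Finset.sum_lt_sum_of_equiv e (fun b hb =>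
    h.wdeg_lt_of_mem_support_unitriangularBasis hrank (e b) (mem_support_iff.mpr (he b)) hb) hne

end TopWeightExponentsIn

end TopWeight

section Plucker

variable {K : Type*} [Field K] {r k : ℕ} {f : Fin k → MvPolynomial (Fin r) K}

theorem disjoint_span_ker_of_mem_pluckerSupport {A : Finset (Fin r →₀ ℕ)}
    (hA : A ∈ pluckerSupport f) :
    Disjoint (Submodule.span K (Set.range f)) (LinearMap.ker (restrictCoeffs A)) :=
  Submodule.range_ker_disjoint hA.2

namespace TopWeightExponentsIn

variable {w : Fin r → ℝ} {A : Finset (Fin r →₀ ℕ)}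

theorem mem_pluckerSupport (h : TopWeightExponentsIn w A (Submodule.span K (Set.range f)))
    (hf : LinearIndependent K f) (hcard : A.card = k) : A ∈ pluckerSupport f :=
  ⟨hcard, hf.map h.disjoint_ker⟩

theorem sum_wdeg_lt_of_mem_pluckerSupport
    (h : TopWeightExponentsIn w A (Submodule.span K (Set.range f)))
    (hf : LinearIndependent K f) (hcard : A.card = k) {A' : Finset (Fin r →₀ ℕ)}
    (hA' : A' ∈ pluckerSupport f) (hne : A' ≠ A) :
    ∑ b ∈ A', wdeg w b < ∑ a ∈ A, wdeg w a :=
  h.sum_wdeg_lt (by rw [finrank_span_eq_card hf, Fintype.card_fin, hcard])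
    (hA'.1.trans hcard.symm) (disjoint_span_ker_of_mem_pluckerSupport hA') hne

end TopWeightExponentsIn

theorem dotProduct_sum_exponents {σ : Type*} [Fintype σ] (u : σ → ℝ) (C : Finset (σ →₀ ℕ)) :
    u ⬝ᵥ (fun i => ∑ a ∈ C, ((a i : ℕ) : ℝ)) = ∑ a ∈ C, wdeg u a := by
  simp only [dotProduct, wdeg, Finset.mul_sum]
  exact Finset.sum_comm

theorem dotProduct_lt_of_sum_wdeg_lt {w : Fin r → ℝ} {A : Finset (Fin r →₀ ℕ)}
    (h : ∀ A' ∈ pluckerSupport f, A' ≠ A → ∑ b ∈ A', wdeg w b < ∑ a ∈ A, wdeg w a) :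
    ∀ v ∈ stateWeights f, v ≠ (fun i => ∑ a ∈ A, ((a i : ℕ) : ℝ)) →
      w ⬝ᵥ v < w ⬝ᵥ fun i => ∑ a ∈ A, ((a i : ℕ) : ℝ) := by
  rintro _ ⟨A', hA', rfl⟩ hne
  rw [dotProduct_sum_exponents, dotProduct_sum_exponents]
  exact h A' hA' (by rintro rfl; exact hne rfl)

end Plucker

theorem stmt17_general {K : Type*} [Field K] {r k : ℕ} (d : ℕ)
    (I : Ideal (MvPolynomial (Fin r) K))
    (w w' : Fin r → ℝ)
    (hmonw : IsMonomialIdeal (initialIdeal w I))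
    (hmonw' : IsMonomialIdeal (initialIdeal w' I))
    (f : Fin k → MvPolynomial (Fin r) K)
    (hfI : ∀ j, f j ∈ I) (hfhom : ∀ j, (f j).IsHomogeneous d)
    (hfind : LinearIndependent K f)
    (A B : Finset (Fin r →₀ ℕ)) (hAcard : A.card = k) (hBcard : B.card = k)
    (hAspan : ∀ g ∈ initialIdeal w I, MvPolynomial.IsHomogeneous g d →
      g ∈ Submodule.span K ((fun a => (monomial a (1 : K) : MvPolynomial (Fin r) K)) '' A))
    (hBspan : ∀ g ∈ initialIdeal w' I, MvPolynomial.IsHomogeneous g d →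
      g ∈ Submodule.span K ((fun b => (monomial b (1 : K) : MvPolynomial (Fin r) K)) '' B)) :
    (fun i => ∑ a ∈ A, ((a i : ℕ) : ℝ)) ∈ stateWeights f ∧
    (fun i => ∑ a ∈ A, ((a i : ℕ) : ℝ)) ∉
      convexHull ℝ (stateWeights f \ {fun i => ∑ a ∈ A, ((a i : ℕ) : ℝ)}) ∧
    (fun i => ∑ b ∈ B, ((b i : ℕ) : ℝ)) ∈ stateWeights f ∧
    (fun i => ∑ b ∈ B, ((b i : ℕ) : ℝ)) ∉
      convexHull ℝ (stateWeights f \ {fun i => ∑ b ∈ B, ((b i : ℕ) : ℝ)}) ∧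
    ∀ v' ∈ stateWeights f, v' ≠ (fun i => ∑ a ∈ A, ((a i : ℕ) : ℝ)) →
      (∑ i, w i * v' i) < ∑ i, w i * ∑ a ∈ A, ((a i : ℕ) : ℝ) := by
  have hfI' : Submodule.span K (Set.range f) ≤ I.restrictScalars K :=
    Submodule.span_le.mpr (Set.range_subset_iff.mpr hfI)
  have hfd : Submodule.span K (Set.range f) ≤ homogeneousSubmodule (Fin r) K d :=
    Submodule.span_le.mpr (Set.range_subset_iff.mpr hfhom)
  have htopA := topWeightExponentsIn_of_initialIdeal hmonw hAspan hfI' hfd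
  have htopB := topWeightExponentsIn_of_initialIdeal hmonw' hBspan hfI' hfd
  have hltA := dotProduct_lt_of_sum_wdeg_lt fun _ =>
    htopA.sum_wdeg_lt_of_mem_pluckerSupport hfind hAcard
  have hltB := dotProduct_lt_of_sum_wdeg_lt fun _ =>
    htopB.sum_wdeg_lt_of_mem_pluckerSupport hfind hBcard
  exact ⟨⟨A, htopA.mem_pluckerSupport hfind hAcard, rfl⟩,
    notMem_convexHull_diff_singleton_of_forall_lt (dotProductBilin ℝ ℝ w) hltA,
    ⟨B, htopB.mem_pluckerSupport hfind hBcard, rfl⟩,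
    notMem_convexHull_diff_singleton_of_forall_lt (dotProductBilin ℝ ℝ w') hltB, hltA⟩

/-- Let `I` be a homogeneous ideal, `f` a basis of `I_d`, and let `w, w'` be nonnegative
weight vectors with distinct monomial initial ideals in degree `d`, with monomial bases
of `(in_w I)_d`, `(in_{w'} I)_d` given by exponent sets `A`, `B`.  Then the Plücker
weights `Σ_{a∈A} a` and `Σ_{b∈B} b` are vertices of the degree-`d` state polytope, and
the `w`-pairing with `Σ_{a∈A} a` strictly exceeds that with every other state weight. -/
theorem stmt17 {K : Type*} [Field K] {r k : ℕ} (d : ℕ)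
    (I : Ideal (MvPolynomial (Fin r) K))
    (hIhom : ∀ g ∈ I, ∀ e : ℕ, MvPolynomial.homogeneousComponent e g ∈ I)
    (w w' : Fin r → ℝ) (hw : ∀ i, 0 ≤ w i) (hw' : ∀ i, 0 ≤ w' i)
    (hmonw : IsMonomialIdeal (initialIdeal w I))
    (hmonw' : IsMonomialIdeal (initialIdeal w' I))
    (f : Fin k → MvPolynomial (Fin r) K)
    (hfI : ∀ j, f j ∈ I) (hfhom : ∀ j, (f j).IsHomogeneous d)
    (hfind : LinearIndependent K f)
    (hfspan : ∀ g ∈ I, g.IsHomogeneous d → g ∈ Submodule.span K (Set.range f))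
    (A B : Finset (Fin r →₀ ℕ)) (hAcard : A.card = k) (hBcard : B.card = k)
    (hA : ∀ a ∈ A, (monomial a (1 : K)).IsHomogeneous d ∧
      (monomial a (1 : K) : MvPolynomial (Fin r) K) ∈ initialIdeal w I)
    (hAspan : ∀ g ∈ initialIdeal w I, MvPolynomial.IsHomogeneous g d →
      g ∈ Submodule.span K ((fun a => (monomial a (1 : K) : MvPolynomial (Fin r) K)) '' A))
    (hB : ∀ b ∈ B, (monomial b (1 : K)).IsHomogeneous d ∧
      (monomial b (1 : K) : MvPolynomial (Fin r) K) ∈ initialIdeal w' I)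
    (hBspan : ∀ g ∈ initialIdeal w' I, MvPolynomial.IsHomogeneous g d →
      g ∈ Submodule.span K ((fun b => (monomial b (1 : K) : MvPolynomial (Fin r) K)) '' B))
    (hAB : A ≠ B) :
    (fun i => ∑ a ∈ A, ((a i : ℕ) : ℝ)) ∈ stateWeights f ∧
    (fun i => ∑ a ∈ A, ((a i : ℕ) : ℝ)) ∉
      convexHull ℝ (stateWeights f \ {fun i => ∑ a ∈ A, ((a i : ℕ) : ℝ)}) ∧
    (fun i => ∑ b ∈ B, ((b i : ℕ) : ℝ)) ∈ stateWeights f ∧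
    (fun i => ∑ b ∈ B, ((b i : ℕ) : ℝ)) ∉
      convexHull ℝ (stateWeights f \ {fun i => ∑ b ∈ B, ((b i : ℕ) : ℝ)}) ∧
    ∀ v' ∈ stateWeights f, v' ≠ (fun i => ∑ a ∈ A, ((a i : ℕ) : ℝ)) →
      (∑ i, w i * v' i) < ∑ i, w i * ∑ a ∈ A, ((a i : ℕ) : ℝ) :=
  stmt17_general d I w w' hmonw hmonw' f hfI hfhom hfind A B hAcard hBcard hAspan hBspan
end
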